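/- arXiv:1607.08576 — 5 statements merged into one kernel-verified Lean document; each statement's English description precedes it below -/
import Mathlib

section
/- For positive integers r_1,...,r_s, the alternating sum over all choices l_t ∈ {0,1} of (-1)^{s - Σl_t} times the binomial coefficient C(Σ_t l_t r_t, s-1) equals 0. -/
open Polynomial Finset

private lemma taylor_ne_zero' (c : ℤ) (p : ℤ[X]) (hp : p ≠ 0) : Polynomial.taylor c p ≠ 0 := by
  intro h
  apply hp
  have := congrArg (Polynomial.taylor (-c)) h
  rwa [Polynomial.taylor_taylor, neg_add_cancel, Polynomial.taylor_zero', LinearMap.id_apply,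
    map_zero] at this

private lemma taylor_leadingCoeff (c : ℤ) (p : ℤ[X]) :
    (Polynomial.taylor c p).leadingCoeff = p.leadingCoeff := by
  rcases eq_or_ne p 0 with rfl | hp
  · simp
  rw [Polynomial.leadingCoeff, Polynomial.natDegree_taylor, Polynomial.taylor_coeff]
  set n := p.natDegree with hn
  have hq : (Polynomial.hasseDeriv n p).natDegree = 0 := by
    have := Polynomial.natDegree_hasseDeriv p n
    omega
  obtain ⟨a, ha⟩ := Polynomial.natDegree_eq_zero.mp hq
  have ha0 : a = p.coeff n := by
    have := congrArg (fun q => Polynomial.coeff q 0) ha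
    simpa [Polynomial.hasseDeriv_coeff] using this
  rw [← ha, ha0, Polynomial.eval_C, Polynomial.leadingCoeff]

private lemma degree_taylor_sub_lt (c : ℤ) (p : ℤ[X]) (hp : p ≠ 0) :
    (Polynomial.taylor c p - p).degree < p.degree := by
  rcases eq_or_ne (Polynomial.taylor c p) p with h | h
  · rw [h, sub_self]
    rw [Polynomial.degree_eq_natDegree hp]
    exact WithBot.bot_lt_coe _
  · have hdeg : (Polynomial.taylor c p).degree = p.degree := by
      rw [Polynomial.degree_eq_natDegree hp,
        Polynomial.degree_eq_natDegree (taylor_ne_zero' c p hp), Polynomial.natDegree_taylor]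
    exact hdeg ▸ Polynomial.degree_sub_lt hdeg (taylor_ne_zero' c p hp) (taylor_leadingCoeff c p)

private lemma key {ι : Type*} [DecidableEq ι] (A : Finset ι) (r : ι → ℤ) :
    ∀ p : ℤ[X], p.degree < A.card →
      ∑ S ∈ A.powerset, (-1 : ℤ) ^ (A.card - S.card) * p.eval (∑ t ∈ S, r t) = 0 := by
  induction A using Finset.induction_on with
  | empty =>
    intro p hp
    simp only [Finset.card_empty, Nat.cast_zero] at hp
    have hp0 : p = 0 := Polynomial.degree_eq_bot.mp (Nat.WithBot.lt_zero_iff.mp hp)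
    simp [hp0]
  | @insert a A ha ih =>
    intro p hp
    rw [Finset.sum_powerset_insert ha]
    have hcard : (insert a A).card = A.card + 1 := Finset.card_insert_of_notMem ha
    have step : ∀ S ∈ A.powerset,
        (-1 : ℤ) ^ ((insert a A).card - S.card) * p.eval (∑ t ∈ S, r t) +
          (-1 : ℤ) ^ ((insert a A).card - (insert a S).card) * p.eval (∑ t ∈ insert a S, r t) =
        (-1 : ℤ) ^ (A.card - S.card) *
          ((Polynomial.taylor (r a) p - p).eval (∑ t ∈ S, r t)) := by
      intro S hS
      have hSA : S ⊆ A := Finset.mem_powerset.mp hS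
      have haS : a ∉ S := fun h => ha (hSA h)
      have hcardS : S.card ≤ A.card := Finset.card_le_card hSA
      rw [Finset.card_insert_of_notMem haS, Finset.sum_insert haS, hcard]
      have h1 : A.card + 1 - S.card = (A.card - S.card) + 1 := by omega
      have h2 : A.card + 1 - (S.card + 1) = A.card - S.card := by omega
      rw [h1, h2, Polynomial.eval_sub, Polynomial.taylor_eval]
      ring_nf
    rw [← Finset.sum_add_distrib, Finset.sum_congr rfl step]
    rcases eq_or_ne p 0 with rfl | hp0
    · simp
    · have hp' : p.degree < ((A.card + 1 : ℕ) : WithBot ℕ) := by rw [hcard] at hp; exact hp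
      have hn : p.natDegree < A.card + 1 := by
        rwa [← Polynomial.natDegree_lt_iff_degree_lt hp0] at hp'
      have hle : p.degree ≤ (A.card : WithBot ℕ) :=
        Polynomial.degree_le_natDegree.trans (by exact_mod_cast Nat.lt_succ_iff.mp hn)
      exact ih _ ((degree_taylor_sub_lt (r a) p hp0).trans_le hle)

/-- For positive integers `r 1, ..., r s` (`s ≥ 1`), the alternating sum over all choices
`l t ∈ {0,1}` of `(-1)^(s - Σ l t)` times `C(Σ_t (l t) * (r t), s - 1)` equals `0`. -/
theorem alt_sum_choose_pred_eq_zero (s : ℕ) (hs : 1 ≤ s) (r : Fin s → ℕ)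
    (hr : ∀ t, 0 < r t) :
    ∑ l : Fin s → Bool,
      (-1 : ℤ) ^ (s - ∑ t, (if l t then 1 else 0)) *
        (Nat.choose (∑ t, if l t then r t else 0) (s - 1) : ℤ) = 0 := by
  classical
  have hsum : ∑ l : Fin s → Bool,
      (-1 : ℤ) ^ (s - ∑ t, (if l t then 1 else 0)) *
        (Nat.choose (∑ t, if l t then r t else 0) (s - 1) : ℤ) =
      ∑ S : Finset (Fin s),
        (-1 : ℤ) ^ (s - S.card) * (Nat.choose (∑ t ∈ S, r t) (s - 1) : ℤ) := by
    refine Fintype.sum_equiv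
      (⟨fun l => Finset.univ.filter (fun t => l t = true), fun S t => t ∈ S,
        fun l => by funext t; simp, fun S => by ext t; simp⟩ :
        (Fin s → Bool) ≃ Finset (Fin s))
      (fun l => (-1 : ℤ) ^ (s - ∑ t, (if l t then 1 else 0)) *
        (Nat.choose (∑ t, if l t then r t else 0) (s - 1) : ℤ))
      (fun S => (-1 : ℤ) ^ (s - S.card) * (Nat.choose (∑ t ∈ S, r t) (s - 1) : ℤ))
      (fun l => ?_)
    simp only [Equiv.coe_fn_mk]
    rw [show (∑ t, (if l t then 1 else 0)) =
        (Finset.univ.filter (fun t => l t = true)).card by rw [Finset.card_filter],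
      show (∑ t, if l t then r t else 0) =
        ∑ t ∈ Finset.univ.filter (fun t => l t = true), r t by rw [Finset.sum_filter]]
  rw [hsum]
  set p : Polynomial ℤ := descPochhammer ℤ (s - 1) with hp
  have hdeg : p.degree < ((Finset.univ : Finset (Fin s)).card : WithBot ℕ) := by
    refine lt_of_le_of_lt Polynomial.degree_le_natDegree ?_
    rw [hp, descPochhammer_natDegree, Finset.card_univ, Fintype.card_fin]
    exact_mod_cast Nat.sub_lt hs one_pos
  have hkey := key (Finset.univ : Finset (Fin s)) (fun t => (r t : ℤ)) p hdeg
  rw [Finset.powerset_univ] at hkey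
  have heval : ∀ S : Finset (Fin s),
      p.eval (∑ t ∈ S, (r t : ℤ)) = ((s-1).factorial : ℤ) * (Nat.choose (∑ t ∈ S, r t) (s-1) : ℤ) := by
    intro S
    rw [hp]
    rw [show (∑ t ∈ S, (r t : ℤ)) = ((∑ t ∈ S, r t : ℕ) : ℤ) by push_cast; ring]
    rw [descPochhammer_eval_eq_descFactorial, Nat.descFactorial_eq_factorial_mul_choose]
    push_cast
    ring
  have : ((s-1).factorial : ℤ) * ∑ S : Finset (Fin s),
      (-1 : ℤ) ^ (s - S.card) * (Nat.choose (∑ t ∈ S, r t) (s-1) : ℤ) = 0 := by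
    rw [Finset.mul_sum]
    rw [← hkey]
    refine Finset.sum_congr rfl fun S _ => ?_
    rw [heval S, Finset.card_univ, Fintype.card_fin]
    ring
  rcases mul_eq_zero.mp this with h | h
  · exact absurd h (by exact_mod_cast (Nat.factorial_pos _).ne')
  · exact h
end

section
/- For positive integers r_1,...,r_s, the alternating sum over all choices l_t ∈ {0,1} of (-1)^{s - Σl_t} times the binomial coefficient C(Σ_t l_t r_t, s) equals the product r_1·r_2···r_s. -/
/-!
Expanding `∏ t, ((X + 1) ^ r t - 1)` over the choice of a summand in each factor gives the
alternating sum of the `(X + 1) ^ (Σ chosen r t)`, whose coefficients of `X ^ s` are the binomials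
`C(Σ chosen r t, s)`. On the other hand each factor is `X` times a polynomial with constant term
`r t`, so the product is `X ^ s` times a polynomial with constant term `∏ t, r t`.
-/

open Polynomial Finset

theorem prod_ite_pow_eq_pow_mul_pow {M ι : Type*} [CommMonoid M] [Fintype ι] (x y : M)
    (r : ι → ℕ) (l : ι → Bool) :
    ∏ t, (if l t then x ^ r t else y) =
      y ^ (Fintype.card ι - ∑ t, if l t then 1 else 0) * x ^ ∑ t, if l t then r t else 0 := by
  rw [prod_ite, prod_pow_eq_pow_sum, prod_const, ← card_filter, ← sum_filter, mul_comm,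
    ← card_univ, ← card_filter_add_card_filter_not (s := univ) (fun t => l t),
    Nat.add_sub_cancel_left]

theorem prod_pow_sub_one_eq_sum {R ι : Type*} [CommRing R] [Fintype ι] [DecidableEq ι]
    (x : R) (r : ι → ℕ) :
    ∏ t, (x ^ r t - 1) = ∑ l : ι → Bool,
      (-1) ^ (Fintype.card ι - ∑ t, if l t then 1 else 0) * x ^ ∑ t, if l t then r t else 0 := by
  have h (t : ι) : x ^ r t - 1 = ∑ b : Bool, if b then x ^ r t else -1 := by
    simp [sub_eq_add_neg]
  simp_rw [h, Fintype.prod_sum, prod_ite_pow_eq_pow_mul_pow]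

theorem coeff_card_prod_mul_X {R ι : Type*} [CommSemiring R] [Fintype ι] (p : ι → R[X]) :
    (∏ t, p t * X).coeff (Fintype.card ι) = ∏ t, (p t).coeff 0 := by
  rw [prod_mul_distrib, prod_const, card_univ, coeff_mul_X_pow', if_pos le_rfl, Nat.sub_self,
    coeff_zero_prod]

theorem X_add_one_pow_sub_one {R : Type*} [CommRing R] (n : ℕ) :
    (X + 1 : R[X]) ^ n - 1 = (∑ j ∈ range n, (X + 1) ^ j) * X := by
  rw [← geom_sum_mul, add_sub_cancel_right]

theorem coeff_card_prod_X_add_one_pow_sub_one {R ι : Type*} [CommRing R] [Fintype ι]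
    (r : ι → ℕ) : (∏ t, ((X + 1 : R[X]) ^ r t - 1)).coeff (Fintype.card ι) = ∏ t, (r t : R) := by
  simp [X_add_one_pow_sub_one, coeff_card_prod_mul_X, finsetSum_coeff, coeff_X_add_one_pow]

theorem alt_sum_choose_eq_prod_general (s : ℕ) (r : Fin s → ℕ) :
    ∑ l : Fin s → Bool,
      (-1 : ℤ) ^ (s - ∑ t, (if l t then 1 else 0)) *
        (Nat.choose (∑ t, if l t then r t else 0) s : ℤ) = (∏ t, (r t : ℤ)) := by
  have neg_one_pow (k : ℕ) : (-1 : ℤ[X]) ^ k = C ((-1) ^ k) := by simp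
  calc _ = (∑ l : Fin s → Bool, (-1 : ℤ[X]) ^ (s - ∑ t, if l t then 1 else 0) *
          (X + 1) ^ ∑ t, if l t then r t else 0).coeff s := by
        simp only [finsetSum_coeff, neg_one_pow, coeff_C_mul, coeff_X_add_one_pow]
    _ = (∏ t, ((X + 1 : ℤ[X]) ^ r t - 1)).coeff s := by
        rw [prod_pow_sub_one_eq_sum, Fintype.card_fin]
    _ = ∏ t, (r t : ℤ) := by
        simpa using coeff_card_prod_X_add_one_pow_sub_one (R := ℤ) r

/-- For positive integers `r 1, ..., r s` (`s ≥ 1`), the alternating sum over all choices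
`l t ∈ {0,1}` of `(-1)^(s - Σ l t)` times `C(Σ_t (l t) * (r t), s)` equals `∏ t, r t`. -/
theorem alt_sum_choose_eq_prod (s : ℕ) (hs : 1 ≤ s) (r : Fin s → ℕ)
    (hr : ∀ t, 0 < r t) :
    ∑ l : Fin s → Bool,
      (-1 : ℤ) ^ (s - ∑ t, (if l t then 1 else 0)) *
        (Nat.choose (∑ t, if l t then r t else 0) s : ℤ) = (∏ t, (r t : ℤ)) :=
  alt_sum_choose_eq_prod_general s r
end

section
/- Let I = [0, κ) ⊂ ℝ/ℤ be an interval with κ = qα − p ∈ (0,1) for integers p, q with q > 0. Then the function g(x) = −Σ_{j=0}^{q−1}{x − jα} (where {·} denotes fractional part) is a transfer function for I: χ_I(x) − |I| = g(x) − g(x − α) for a.e. x, and ‖g‖_∞ ≤ q. -/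
/-- The transfer function `g(x) = -∑_{j=0}^{q-1} {x - jα}`. -/
noncomputable def transferG (α : ℝ) (q : ℤ) (x : ℝ) : ℝ :=
  -∑ j ∈ Finset.range q.toNat, Int.fract (x - (j : ℝ) * α)

/-- For the interval `I = [0, κ) ⊂ ℝ/ℤ` with `κ = qα - p ∈ (0,1)`, the function
`g(x) = -∑_{j=0}^{q-1} {x - jα}` is a transfer function for `I`:
`χ_I(x) - |I| = g(x) - g(x - α)`, and `‖g‖_∞ ≤ q`. -/
theorem interval_bounded_remainder (α : ℝ) (hα : Irrational α) (p q : ℤ) (hq : 0 < q)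
    (κ : ℝ) (hκ : κ = (q : ℝ) * α - (p : ℝ)) (hκ0 : 0 < κ) (hκ1 : κ < 1) :
    (∀ x : ℝ, (if Int.fract x < κ then (1 : ℝ) else 0) - κ =
        transferG α q x - transferG α q (x - α)) ∧
      ∀ x : ℝ, |transferG α q x| ≤ (q : ℝ) := by
  have hqn : ((q.toNat : ℤ) : ℝ) = (q : ℝ) := by
    norm_cast
    exact Int.toNat_of_nonneg hq.le
  constructor
  · intro x
    have tel : transferG α q x - transferG α q (x - α) =
        Int.fract (x - (q : ℝ) * α) - Int.fract x := by
      unfold transferG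
      have hsum : ∑ j ∈ Finset.range q.toNat, Int.fract (x - α - (j : ℝ) * α) =
          ∑ j ∈ Finset.range q.toNat, Int.fract (x - ((j + 1 : ℕ) : ℝ) * α) := by
        refine Finset.sum_congr rfl fun j _ => ?_
        congr 1; push_cast; ring
      have key := Finset.sum_range_sub (fun j : ℕ => Int.fract (x - (j : ℝ) * α)) q.toNat
      rw [Finset.sum_sub_distrib] at key
      simp only [Nat.cast_zero, zero_mul, sub_zero] at key
      have hc : ((q.toNat : ℝ)) = (q : ℝ) := by exact_mod_cast hqn
      rw [hsum]
      rw [hc] at key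
      linarith [key]
    rw [tel]
    have hqa : (q : ℝ) * α = κ + (p : ℝ) := by rw [hκ]; ring
    have h1 : Int.fract (x - (q : ℝ) * α) = Int.fract (Int.fract x - κ) := by
      rw [hqa]
      have : x - (κ + (p : ℝ)) = (Int.fract x - κ) + (⌊x⌋ - p : ℤ) := by
        push_cast [Int.fract]
        ring
      rw [this, Int.fract_add_intCast]
    rw [h1]
    have hfx0 := Int.fract_nonneg x
    have hfx1 := Int.fract_lt_one x
    by_cases h : Int.fract x < κ
    · simp only [h, if_true]
      have h2 : Int.fract (Int.fract x - κ) = Int.fract x - κ + 1 := by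
        have e : Int.fract x - κ = (Int.fract x - κ + 1) + ((-1 : ℤ) : ℝ) := by push_cast; ring
        conv_lhs => rw [e]
        rw [Int.fract_add_intCast]
        exact Int.fract_eq_self.2 ⟨by linarith, by linarith⟩
      rw [h2]; ring
    · simp only [h, if_false]
      push_neg at h
      rw [Int.fract_eq_self.2 ⟨by linarith, by linarith⟩]
      ring
  · intro x
    unfold transferG
    rw [abs_neg, abs_of_nonneg (Finset.sum_nonneg fun j _ => Int.fract_nonneg _)]
    calc ∑ j ∈ Finset.range q.toNat, Int.fract (x - (j : ℝ) * α)
        ≤ ∑ j ∈ Finset.range q.toNat, (1 : ℝ) :=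
          Finset.sum_le_sum fun j _ => (Int.fract_lt_one _).le
      _ = (q.toNat : ℝ) := by simp
      _ = (q : ℝ) := by exact_mod_cast hqn
end

section
/- Van der Corput's fundamental inequality: for complex numbers u_1,...,u_N and any integer 1 ≤ H ≤ N, |Σ_{n=1}^N u_n / N|² ≤ (N+H−1)/(N²H) · Σ_{n=1}^N |u_n|² + 2(N+H−1)/(N²H²) · Σ_{k=1}^{H−1}(H−k)·Re(Σ_{n=1}^{N−k} u_n · conj(u_{n+k})). -/
/-!
Average the `N + H - 1` sliding window sums `W m = ∑_{m - H < n ≤ m} u n` (with `u` extended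
by zero outside `[1, N]`): each `u n` lies in exactly `H` windows, so `∑ₘ W m = H ∑ₙ u n`, and
Cauchy–Schwarz gives `H² |∑ u|² ≤ (N + H - 1) ∑ₘ |W m|²`. Expanding `|W m|²` and summing over `m`
turns the double sum over pairs of window positions `(i, j)` into the correlation of `u` at lag
`|i - j|`, which occurs for `H - |i - j|` pairs.
-/

open Finset ComplexConjugate

section OffsetSums

variable {M : Type*} [AddCommMonoid M]

theorem sum_range_sum_Ico_eq_sum_Icc_sum_range (H : ℕ) (F : ℕ → ℕ → M) :
    ∑ i ∈ range H, ∑ j ∈ Ico (i + 1) H, F i j =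
      ∑ k ∈ Icc 1 (H - 1), ∑ i ∈ range (H - k), F i (i + k) := by
  rw [sum_sigma', sum_sigma']
  refine sum_nbij' (fun p => ⟨p.2 - p.1, p.1⟩) (fun p => ⟨p.2, p.2 + p.1⟩) ?_ ?_ ?_ ?_ ?_ <;>
    rintro ⟨a, b⟩ hab <;> simp only [mem_sigma, mem_range, mem_Ico, mem_Icc] at hab ⊢
  · omega
  · omega
  · simp only [Sigma.mk.injEq, heq_eq_eq, true_and]; omega
  · simp
  · rw [Nat.add_sub_cancel' (by omega : a ≤ b)]

theorem sum_range_sum_range_eq_sum_diag_add_sum_offset (H : ℕ) (F : ℕ → ℕ → M) :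
    ∑ i ∈ range H, ∑ j ∈ range H, F i j =
      ∑ i ∈ range H, F i i +
        ∑ k ∈ Icc 1 (H - 1), ∑ i ∈ range (H - k), (F i (i + k) + F (i + k) i) := by
  have split_row : ∀ i ∈ range H, ∑ j ∈ range H, F i j =
      F i i + ∑ j ∈ Ico (i + 1) H, F i j + ∑ j ∈ range i, F i j := by
    intro i hi
    rw [mem_range] at hi
    rw [← sum_range_add_sum_Ico _ hi.le, sum_eq_sum_Ico_succ_bot hi, add_comm]
  have below_diag : ∑ i ∈ range H, ∑ j ∈ range i, F i j =
      ∑ j ∈ range H, ∑ i ∈ Ico (j + 1) H, F i j :=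
    sum_comm' fun i j => by simp only [mem_range, mem_Ico]; omega
  rw [sum_congr rfl split_row, sum_add_distrib, sum_add_distrib, below_diag,
    sum_range_sum_Ico_eq_sum_Icc_sum_range,
    sum_range_sum_Ico_eq_sum_Icc_sum_range H (fun i j => F j i),
    add_assoc, ← sum_add_distrib]
  simp only [sum_add_distrib]

theorem sum_Icc_comp_tsub {N H h : ℕ} {g : ℕ → M} (hg : ∀ n ∉ Icc 1 N, g n = 0) (hh : h < H) :
    ∑ m ∈ Icc 1 (N + H - 1), g (m - h) = ∑ n ∈ Icc 1 N, g n := by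
  have hsub : Icc (1 + h) (N + h) ⊆ Icc 1 (N + H - 1) := Icc_subset_Icc (by omega) (by omega)
  rw [← sum_subset hsub fun m _ hm => hg _ (by simp only [mem_Icc] at hm ⊢; omega),
    ← map_add_right_Icc, sum_map]
  simp

end OffsetSums

theorem norm_sum_sq_le_card_mul_sum_norm_sq {ι E : Type*} [SeminormedAddCommGroup E]
    (s : Finset ι) (f : ι → E) : ‖∑ i ∈ s, f i‖ ^ 2 ≤ #s * ∑ i ∈ s, ‖f i‖ ^ 2 :=
  (pow_le_pow_left₀ (norm_nonneg _) (norm_sum_le s f) 2).trans sq_sum_le_card_mul_sum_sq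

/-- The truncated subtraction `m - h` is harmless for the `v` used here, which vanish at `0`. -/
def windowSum (v : ℕ → ℂ) (H m : ℕ) : ℂ := ∑ h ∈ range H, v (m - h)

section Windows

variable {N H : ℕ} {v : ℕ → ℂ}

theorem sum_windowSum (hv : ∀ n ∉ Icc 1 N, v n = 0) :
    ∑ m ∈ Icc 1 (N + H - 1), windowSum v H m = H * ∑ n ∈ Icc 1 N, v n := by
  simp only [windowSum]
  rw [sum_comm, sum_congr rfl fun h hh => sum_Icc_comp_tsub hv (mem_range.1 hh), sum_const,
    card_range, nsmul_eq_mul]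

theorem sum_Icc_tsub_mul_conj_tsub {i k : ℕ} (hv : ∀ n ∉ Icc 1 N, v n = 0) (hik : i + k < H) :
    ∑ m ∈ Icc 1 (N + H - 1), v (m - (i + k)) * conj (v (m - i)) =
      ∑ n ∈ Icc 1 (N - k), v n * conj (v (n + k)) := by
  have hv_mul : ∀ n ∉ Icc 1 N, v n * conj (v (n + k)) = 0 := fun n hn => by rw [hv n hn, zero_mul]
  have hshift : ∀ m, v (m - (i + k)) * conj (v (m - i)) =
      v (m - (i + k)) * conj (v (m - (i + k) + k)) := by
    intro m
    rcases le_or_gt (i + k) m with hm | hm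
    · rw [show m - (i + k) + k = m - i by omega]
    · rw [Nat.sub_eq_zero_of_le hm.le, hv 0 (by simp), zero_mul, zero_mul]
  rw [sum_congr rfl fun m _ => hshift m, sum_Icc_comp_tsub hv_mul hik]
  refine (sum_subset (Icc_subset_Icc_right (N.sub_le k)) fun n hn hn' => ?_).symm
  simp only [mem_Icc] at hn hn'
  rw [hv (n + k) (by simp only [mem_Icc]; omega), map_zero, mul_zero]

theorem sum_norm_sq_windowSum (hv : ∀ n ∉ Icc 1 N, v n = 0) :
    ∑ m ∈ Icc 1 (N + H - 1), ‖windowSum v H m‖ ^ 2 =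
      H * ∑ n ∈ Icc 1 N, ‖v n‖ ^ 2 + 2 * ∑ k ∈ Icc 1 (H - 1),
        ((H : ℝ) - k) * (∑ n ∈ Icc 1 (N - k), v n * conj (v (n + k))).re := by
  set c : ℕ → ℂ := fun k => ∑ n ∈ Icc 1 (N - k), v n * conj (v (n + k))
  have hnorm_sq : ∀ m, ‖windowSum v H m‖ ^ 2 =
      (∑ i ∈ range H, ∑ j ∈ range H, v (m - i) * conj (v (m - j))).re := by
    intro m
    rw [windowSum, ← sum_mul_sum, ← map_sum, Complex.mul_conj', ← Complex.ofReal_pow,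
      Complex.ofReal_re]
  have hdiag : ∀ i ∈ range H, ∑ m ∈ Icc 1 (N + H - 1), v (m - i) * conj (v (m - i)) = c 0 :=
    fun i hi => sum_Icc_tsub_mul_conj_tsub (k := 0) hv (mem_range.1 hi)
  have hoffdiag : ∀ k ∈ Icc 1 (H - 1), ∀ i ∈ range (H - k),
      ∑ m ∈ Icc 1 (N + H - 1), v (m - i) * conj (v (m - (i + k))) +
        ∑ m ∈ Icc 1 (N + H - 1), v (m - (i + k)) * conj (v (m - i)) = conj (c k) + c k := by
    intro k hk i hi
    simp only [mem_Icc, mem_range] at hk hi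
    rw [show c k = _ from (sum_Icc_tsub_mul_conj_tsub hv (by omega : i + k < H)).symm, map_sum]
    simp only [map_mul, Complex.conj_conj, mul_comm]
  calc ∑ m ∈ Icc 1 (N + H - 1), ‖windowSum v H m‖ ^ 2
      = (∑ i ∈ range H, ∑ j ∈ range H,
          ∑ m ∈ Icc 1 (N + H - 1), v (m - i) * conj (v (m - j))).re := by
        simp_rw [hnorm_sq, ← Complex.re_sum]
        rw [sum_comm]
        simp_rw [sum_comm (s := Icc 1 (N + H - 1))]
    _ = (∑ i ∈ range H, c 0 + ∑ k ∈ Icc 1 (H - 1), ∑ i ∈ range (H - k), (conj (c k) + c k)).re := by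
        rw [sum_range_sum_range_eq_sum_diag_add_sum_offset, sum_congr rfl hdiag,
          sum_congr rfl fun k hk => sum_congr rfl (hoffdiag k hk)]
    _ = H * (c 0).re + 2 * ∑ k ∈ Icc 1 (H - 1), ((H : ℝ) - k) * (c k).re := by
        simp only [Complex.add_re, Complex.re_sum, add_comm (conj _), Complex.add_conj,
          sum_const, card_range, nsmul_eq_mul, ← Complex.ofReal_natCast, Complex.re_ofReal_mul,
          Complex.ofReal_re, mul_sum]
        refine congrArg _ (sum_congr rfl fun k hk => ?_)
        rw [Nat.cast_sub (by simp only [mem_Icc] at hk; omega)]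
        ring
    _ = _ := by
        simp [c, Complex.mul_conj', ← Complex.ofReal_pow]

end Windows

theorem sq_div_le_of_sq_mul_le {N H T A B : ℝ} (hH : 0 < H)
    (h : (H * T) ^ 2 ≤ (N + H - 1) * (H * A + 2 * B)) :
    (T / N) ^ 2 ≤ (N + H - 1) / (N ^ 2 * H) * A + 2 * (N + H - 1) / (N ^ 2 * H ^ 2) * B :=
  calc (T / N) ^ 2 = (H * T) ^ 2 / H ^ 2 / N ^ 2 := by
        rw [mul_pow, mul_div_cancel_left₀ _ (by positivity), div_pow]
    _ ≤ (N + H - 1) * (H * A + 2 * B) / H ^ 2 / N ^ 2 := by gcongr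
    _ = _ := by field_simp

theorem van_der_corput_fundamental_general (N H : ℕ) (hH : 1 ≤ H) (u : ℕ → ℂ) :
    (‖∑ n ∈ Finset.Icc 1 N, u n‖ / N) ^ 2 ≤
      ((N : ℝ) + H - 1) / ((N : ℝ) ^ 2 * H) *
          ∑ n ∈ Finset.Icc 1 N, ‖u n‖ ^ 2 +
        2 * ((N : ℝ) + H - 1) / ((N : ℝ) ^ 2 * H ^ 2) *
          ∑ k ∈ Finset.Icc 1 (H - 1), ((H : ℝ) - k) *
            (∑ n ∈ Finset.Icc 1 (N - k), u n * (starRingEnd ℂ) (u (n + k))).re := by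
  set v := (↑(Icc 1 N) : Set ℕ).indicator u
  have hv : ∀ n ∉ Icc 1 N, v n = 0 := fun n hn => Set.indicator_of_notMem hn u
  have hvu : ∀ n ∈ Icc 1 N, v n = u n := fun n hn => Set.indicator_of_mem hn u
  have hcard : (#(Icc 1 (N + H - 1)) : ℝ) = N + H - 1 := by
    rw [Nat.card_Icc, Nat.add_sub_cancel, Nat.cast_sub (by omega)]
    push_cast
    ring
  have hcorr : ∀ k, ∑ n ∈ Icc 1 (N - k), v n * conj (v (n + k)) =
      ∑ n ∈ Icc 1 (N - k), u n * conj (u (n + k)) := fun k => sum_congr rfl fun n hn => by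
    simp only [mem_Icc] at hn
    rw [hvu n (by simp only [mem_Icc]; omega), hvu (n + k) (by simp only [mem_Icc]; omega)]
  have key : ((H : ℝ) * ‖∑ n ∈ Icc 1 N, u n‖) ^ 2 ≤ (N + H - 1) * (H * ∑ n ∈ Icc 1 N, ‖u n‖ ^ 2 +
      2 * ∑ k ∈ Icc 1 (H - 1), ((H : ℝ) - k) *
        (∑ n ∈ Icc 1 (N - k), u n * conj (u (n + k))).re) :=
    calc ((H : ℝ) * ‖∑ n ∈ Icc 1 N, u n‖) ^ 2
        = ‖∑ m ∈ Icc 1 (N + H - 1), windowSum v H m‖ ^ 2 := by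
          rw [sum_windowSum hv, norm_mul, Complex.norm_natCast, sum_congr rfl hvu]
      _ ≤ #(Icc 1 (N + H - 1)) * ∑ m ∈ Icc 1 (N + H - 1), ‖windowSum v H m‖ ^ 2 :=
          norm_sum_sq_le_card_mul_sum_norm_sq _ _
      _ = _ := by
          rw [hcard, sum_norm_sq_windowSum hv, sum_congr rfl fun n hn => by rw [hvu n hn]]
          simp_rw [hcorr]
  exact sq_div_le_of_sq_mul_le (by exact_mod_cast hH) key

/-- Van der Corput's fundamental inequality: for complex `u 1, ..., u N` and any integer
`1 ≤ H ≤ N`,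
`|∑_{n=1}^N u n / N|² ≤ (N+H-1)/(N²H) ∑ |u n|²
  + 2(N+H-1)/(N²H²) ∑_{k=1}^{H-1} (H-k) Re ∑_{n=1}^{N-k} u n conj (u (n+k))`. -/
theorem van_der_corput_fundamental (N H : ℕ) (hH : 1 ≤ H) (hHN : H ≤ N) (u : ℕ → ℂ) :
    (‖∑ n ∈ Finset.Icc 1 N, u n‖ / N) ^ 2 ≤
      ((N : ℝ) + H - 1) / ((N : ℝ) ^ 2 * H) *
          ∑ n ∈ Finset.Icc 1 N, ‖u n‖ ^ 2 +
        2 * ((N : ℝ) + H - 1) / ((N : ℝ) ^ 2 * H ^ 2) *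
          ∑ k ∈ Finset.Icc 1 (H - 1), ((H : ℝ) - k) *
            (∑ n ∈ Finset.Icc 1 (N - k), u n * (starRingEnd ℂ) (u (n + k))).re :=
  van_der_corput_fundamental_general N H hH u
end

section
/- Let α be irrational with continued fraction convergents p_m/q_m. Then every point of 𝕋 enters any interval of length ≥ 1/q_m within q_m + q_{m−1} − 1 steps of the rotation by α: for every x ∈ 𝕋 and every interval I ⊂ 𝕋 with |I| ≥ 1/q_m, there exists 0 ≤ k ≤ q_m + q_{m−1} − 1 with x + kα ∈ I. -/
/-!
Let `θₙ = qₙα - pₙ`. The determinant identity `qₙ₊₁θₙ - qₙθₙ₊₁ = (-1)ⁿ` together with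
`|θₙ| ≤ 1/qₙ₊₁` and `qₙ + qₙ₊₁ ≤ qₙ₊₂` shows that `θₙ` and `θₙ₊₁` have opposite signs and
`|θₙ₊₁| ≤ |θₙ| ≤ 1/qₙ₊₁`. Among the points `x + kα`, `0 ≤ k < qₙ₊₁ + qₙ`, every point moves to
another one by adding `qₙ` to `k` (a shift by `θₙ` mod 1) or subtracting `qₙ₊₁` (a shift by
`-θₙ₊₁`). Both shifts point the same way and are at most `|θₙ|` long, so the lowest point (if they
point down) or the image of the highest point (if they point up) lies in `[0, |θₙ|)` mod 1.
-/

open GenContFract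
open GenContFract (of)

namespace GenContFract

variable {K : Type*} [Field K] [LinearOrder K] [FloorRing K]

theorem exists_int_eq_nth_contsAux (v : K) (n : ℕ) :
    ∃ a b : ℤ, (of v).contsAux n = ⟨a, b⟩ := by
  suffices ∀ n, (∃ a b : ℤ, (of v).contsAux n = ⟨a, b⟩) ∧
      ∃ a b : ℤ, (of v).contsAux (n + 1) = ⟨a, b⟩ from (this n).1
  intro n
  induction n with
  | zero => exact ⟨⟨1, 0, by simp⟩, ⌊v⌋, 1, by simp [of_h_eq_floor]⟩
  | succ n ih =>
    refine ⟨ih.2, ?_⟩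
    obtain ⟨⟨a₀, b₀, h₀⟩, a₁, b₁, h₁⟩ := ih
    cases hs : (of v).s.get? n with
    | none => exact ⟨a₁, b₁, (contsAux_stable_step_of_terminated hs).trans h₁⟩
    | some gp =>
      obtain ⟨hnum, z, hz⟩ := of_partNum_eq_one_and_exists_int_partDen_eq hs
      refine ⟨z * a₁ + a₀, z * b₁ + b₀, ?_⟩
      rw [contsAux_recurrence hs h₀ h₁, hnum, hz]
      push_cast
      ring_nf

theorem exists_int_eq_nth_num (v : K) (n : ℕ) : ∃ a : ℤ, (of v).nums n = a := by
  obtain ⟨a, b, h⟩ := exists_int_eq_nth_contsAux v (n + 1)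
  exact ⟨a, by rw [num_eq_conts_a, nth_cont_eq_succ_nth_contAux, h]⟩

variable [IsStrictOrderedRing K]

theorem one_le_of_den (v : K) (n : ℕ) : 1 ≤ (of v).dens n :=
  zeroth_den_eq_one (g := of v) ▸
    monotone_nat_of_le_succ (f := (of v).dens) (fun _ => of_den_mono) n.zero_le

theorem zero_lt_of_den (v : K) (n : ℕ) : 0 < (of v).dens n :=
  zero_lt_one.trans_le (one_le_of_den v n)

theorem exists_nat_eq_nth_den (v : K) (n : ℕ) : ∃ b : ℕ, (of v).dens n = b := by
  obtain ⟨a, b, h⟩ := exists_int_eq_nth_contsAux v (n + 1)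
  have hb : (of v).dens n = b := by rw [den_eq_conts_b, nth_cont_eq_succ_nth_contAux, h]
  refine ⟨b.toNat, ?_⟩
  have : (0 : K) ≤ b := hb ▸ (zero_lt_of_den v n).le
  rw [hb, ← Int.cast_natCast, Int.toNat_of_nonneg (by exact_mod_cast this)]

theorem of_den_add_of_den_le {v : K} {n : ℕ} (h : ¬(of v).TerminatedAt (n + 1)) :
    (of v).dens n + (of v).dens (n + 1) ≤ (of v).dens (n + 2) := by
  obtain ⟨gp, hs⟩ := Option.ne_none_iff_exists'.1 h
  rw [dens_recurrence hs rfl rfl, (of_partNum_eq_one_and_exists_int_partDen_eq hs).1, one_mul,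
    add_comm]
  gcongr
  exact le_mul_of_one_le_left (zero_lt_of_den v _).le
    (of_one_le_get?_partDen (partDen_eq_s_b hs))

section Irrational

variable {α : ℝ}

theorem not_terminatedAt_of_irrational (hα : Irrational α) (n : ℕ) : ¬(of α).TerminatedAt n :=
  fun h => hα ((terminates_iff_rat α).1 ⟨n, h⟩ |>.imp fun _ h => h.symm)

noncomputable def denMulSubNum (α : ℝ) (n : ℕ) : ℝ := (of α).dens n * α - (of α).nums n

theorem denMulSubNum_ne_zero (hα : Irrational α) (n : ℕ) : denMulSubNum α n ≠ 0 := by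
  obtain ⟨a, ha⟩ := exists_int_eq_nth_num α n
  obtain ⟨b, hb⟩ := exists_nat_eq_nth_den α n
  have hb0 : b ≠ 0 := Nat.one_le_iff_ne_zero.mp (Nat.one_le_cast.mp (hb ▸ one_le_of_den α n))
  rw [denMulSubNum, ha, hb, sub_ne_zero]
  exact (hα.natCast_mul hb0).ne_int a

theorem abs_denMulSubNum_le (hα : Irrational α) (n : ℕ) :
    |denMulSubNum α n| ≤ 1 / (of α).dens (n + 1) := by
  have hpos := zero_lt_of_den α n
  calc |denMulSubNum α n| = |(of α).dens n * (α - (of α).convs n)| := by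
        rw [conv_eq_num_div_den, mul_sub, mul_div_cancel₀ _ hpos.ne', denMulSubNum]
    _ = (of α).dens n * |α - (of α).convs n| := by rw [abs_mul, abs_of_pos hpos]
    _ ≤ (of α).dens n * (1 / ((of α).dens n * (of α).dens (n + 1))) := by
        gcongr
        exact abs_sub_convs_le (not_terminatedAt_of_irrational hα n)
    _ = 1 / (of α).dens (n + 1) := by field_simp

theorem dens_succ_mul_denMulSubNum_sub (hα : Irrational α) (n : ℕ) :
    (of α).dens (n + 1) * denMulSubNum α n - (of α).dens n * denMulSubNum α (n + 1) =
      (-1) ^ n := by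
  have h := SimpContFract.determinant (s := ⟨of α, of_isSimpContFract α⟩)
    (not_terminatedAt_of_irrational hα n)
  simp only [denMulSubNum]
  linear_combination -h

theorem denMulSubNum_succ_mul_neg (hα : Irrational α) (n : ℕ) :
    denMulSubNum α (n + 1) * denMulSubNum α n < 0 := by
  set a := (of α).dens (n + 1) * denMulSubNum α n
  set b := (of α).dens n * denMulSubNum α (n + 1)
  have hpos := zero_lt_of_den α
  have ha : |a| ≤ 1 := by
    rw [abs_mul, abs_of_pos (hpos _), ← le_div_iff₀' (hpos _)]
    exact abs_denMulSubNum_le hα n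
  have hb : |b| < 1 := by
    rw [abs_mul, abs_of_pos (hpos _)]
    calc (of α).dens n * |denMulSubNum α (n + 1)| ≤ (of α).dens n * (1 / (of α).dens (n + 2)) :=
          mul_le_mul_of_nonneg_left (abs_denMulSubNum_le hα (n + 1)) (hpos n).le
      _ < 1 := by
          rw [mul_one_div, div_lt_one (hpos _)]
          linarith [hpos (n + 1), of_den_add_of_den_le (not_terminatedAt_of_irrational hα (n + 1))]
  have hb0 : b ≠ 0 := mul_ne_zero (hpos n).ne' (denMulSubNum_ne_zero hα (n + 1))
  have hab : |a - b| = 1 := by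
    rw [dens_succ_mul_denMulSubNum_sub hα, abs_pow, abs_neg, abs_one, one_pow]
  -- if `a` and `b` had the same sign, `|a| ≤ 1` and `0 < |b| < 1` would give `|a - b| < 1`
  by_contra! h
  have hab' : 0 ≤ a * b := by
    have := mul_nonneg h (mul_pos (hpos n) (hpos (n + 1))).le
    linarith
  rw [abs_le] at ha
  rw [abs_lt] at hb
  rcases mul_nonneg_iff.1 hab' with ⟨ha0, hb0'⟩ | ⟨ha0, hb0'⟩
  · have := hb0'.lt_of_ne' hb0
    rcases abs_eq (zero_le_one' ℝ) |>.1 hab with h1 | h1 <;> linarith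
  · have := hb0'.lt_of_ne hb0
    rcases abs_eq (zero_le_one' ℝ) |>.1 hab with h1 | h1 <;> linarith

theorem dens_succ_mul_abs_add_dens_mul_abs (hα : Irrational α) (n : ℕ) :
    (of α).dens (n + 1) * |denMulSubNum α n| + (of α).dens n * |denMulSubNum α (n + 1)| = 1 := by
  have hpos := zero_lt_of_den α
  have hdet := dens_succ_mul_denMulSubNum_sub hα n
  have hdet_abs := congrArg abs hdet
  rw [abs_pow, abs_neg, abs_one, one_pow] at hdet_abs
  rcases mul_neg_iff.1 (denMulSubNum_succ_mul_neg hα n) with ⟨hs1, hs0⟩ | ⟨hs1, hs0⟩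
  · have := mul_neg_of_pos_of_neg (hpos (n + 1)) hs0
    have := mul_pos (hpos n) hs1
    rw [abs_of_neg (by linarith), neg_sub] at hdet_abs
    rw [abs_of_neg hs0, abs_of_pos hs1]
    linarith
  · have := mul_pos (hpos (n + 1)) hs0
    have := mul_neg_of_pos_of_neg (hpos n) hs1
    rw [abs_of_pos (by linarith)] at hdet_abs
    rw [abs_of_pos hs0, abs_of_neg hs1]
    linarith

theorem abs_denMulSubNum_succ_le (hα : Irrational α) (n : ℕ) :
    |denMulSubNum α (n + 1)| ≤ |denMulSubNum α n| := by
  have hpos := zero_lt_of_den α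
  have hle : (of α).dens (n + 2) * |denMulSubNum α (n + 1)| ≤ 1 := by
    rw [← le_div_iff₀' (hpos _)]
    exact abs_denMulSubNum_le hα (n + 1)
  have hrec := of_den_add_of_den_le (not_terminatedAt_of_irrational hα (n + 1))
  have hsum := dens_succ_mul_abs_add_dens_mul_abs hα n
  refine le_of_mul_le_mul_left ?_ (hpos (n + 1))
  nlinarith [abs_nonneg (denMulSubNum α (n + 1))]

end Irrational

end GenContFract

open Finset

section OrbitModOne

variable {ι : Type*} {s : Finset ι} (p : ι → ℝ) {δ : ℝ}

theorem exists_fract_lt_of_forall_exists_add_neg (hs : s.Nonempty)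
    (h : ∀ i ∈ s, ∃ j ∈ s, ∃ d, -δ ≤ d ∧ d < 0 ∧ ∃ z : ℤ, p j = p i + d + z) :
    ∃ i ∈ s, Int.fract (p i) < δ := by
  obtain ⟨i, hi, hmin⟩ := s.exists_min_image (fun i => Int.fract (p i)) hs
  obtain ⟨j, hj, d, hδd, hd, z, hpj⟩ := h i hi
  refine ⟨i, hi, ?_⟩
  by_contra! hδ
  have : Int.fract (p j) = Int.fract (p i) + d := by
    refine Int.fract_eq_iff.2 ⟨by linarith, by linarith [Int.fract_lt_one (p i)], ⌊p i⌋ + z, ?_⟩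
    rw [hpj, Int.fract]
    push_cast
    ring
  linarith [hmin j hj]

theorem exists_fract_lt_of_forall_exists_add_pos (hs : s.Nonempty)
    (h : ∀ i ∈ s, ∃ j ∈ s, ∃ d, 0 < d ∧ d ≤ δ ∧ ∃ z : ℤ, p j = p i + d + z) :
    ∃ j ∈ s, Int.fract (p j) < δ := by
  obtain ⟨i, hi, hmax⟩ := s.exists_max_image (fun i => Int.fract (p i)) hs
  obtain ⟨j, hj, d, hd, hdδ, z, hpj⟩ := h i hi
  refine ⟨j, hj, ?_⟩
  by_contra! hδ
  have hfi := Int.fract_nonneg (p i)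
  have hfi' := Int.fract_lt_one (p i)
  have hd1 : d < 1 := by linarith [Int.fract_lt_one (p j)]
  -- by maximality of `i`, the step from `i` must wrap around past 1
  have hwrap : 1 ≤ Int.fract (p i) + d := by
    by_contra! hlt
    have : Int.fract (p j) = Int.fract (p i) + d := by
      refine Int.fract_eq_iff.2 ⟨by linarith, hlt, ⌊p i⌋ + z, ?_⟩
      rw [hpj, Int.fract]
      push_cast
      ring
    linarith [hmax j hj]
  have : Int.fract (p j) = Int.fract (p i) + d - 1 := by
    refine Int.fract_eq_iff.2 ⟨by linarith, by linarith, ⌊p i⌋ + z + 1, ?_⟩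
    rw [hpj, Int.fract]
    push_cast
    ring
  linarith

end OrbitModOne

theorem exists_fract_add_mul_lt (α : ℝ) {q q' : ℕ} (hq : 0 < q) {A A' : ℤ} {θ θ' : ℝ}
    (hθ : q * α - A = θ) (hθ' : q' * α - A' = θ') (hsign : θ * θ' < 0) (hle : |θ| ≤ |θ'|)
    (v : ℝ) : ∃ k < q + q', Int.fract (v + k * α) < |θ'| := by
  have hs : (range (q + q')).Nonempty := ⟨0, mem_range.2 (by omega)⟩
  have step (k) (hk : k ∈ range (q + q')) : ∃ j ∈ range (q + q'), ∃ e, (e = θ' ∨ e = -θ) ∧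
      ∃ z : ℤ, v + j * α = v + k * α + e + z := by
    rw [mem_range] at hk
    by_cases hkq : k < q
    · refine ⟨k + q', mem_range.2 (by omega), θ', Or.inl rfl, A', ?_⟩
      rw [← hθ']
      push_cast
      ring
    · refine ⟨k - q, mem_range.2 (by omega), -θ, Or.inr rfl, -A, ?_⟩
      rw [← hθ, Nat.cast_sub (by omega)]
      push_cast
      ring
  suffices ∃ k ∈ range (q + q'), Int.fract (v + k * α) < |θ'| by simpa using this
  rcases mul_neg_iff.1 hsign with ⟨hθ0, hθ'0⟩ | ⟨hθ0, hθ'0⟩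
  · refine exists_fract_lt_of_forall_exists_add_neg (fun k : ℕ => v + k * α) hs fun k hk => ?_
    obtain ⟨j, hj, e, he, z, hpj⟩ := step k hk
    refine ⟨j, hj, e, ?_, ?_, z, hpj⟩ <;> rcases he with he | he <;> rw [he] <;>
      linarith [neg_abs_le θ', le_abs_self θ]
  · refine exists_fract_lt_of_forall_exists_add_pos (fun k : ℕ => v + k * α) hs fun k hk => ?_
    obtain ⟨j, hj, e, he, z, hpj⟩ := step k hk
    refine ⟨j, hj, e, ?_, ?_, z, hpj⟩ <;> rcases he with he | he <;> rw [he] <;>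
      linarith [le_abs_self θ', neg_abs_le θ]

/-- Every point of `𝕋` enters any interval of length `≥ 1/q_m` within
`q_m + q_{m-1} - 1` steps of the rotation by an irrational `α`, where `q_m` are the
continued fraction denominators of `α`. The interval is `[c, c+L) mod 1`; membership of
`x + kα` in it is expressed as `{x + kα - c} < L`. -/
theorem rotation_hits_interval_within_qm_steps (α : ℝ) (hα : Irrational α) (m : ℕ)
    (hm : 1 ≤ m) (c L : ℝ) (hL : 1 / (GenContFract.of α).dens m ≤ L) (x : ℝ) :
    ∃ k : ℕ, (k : ℝ) ≤ (GenContFract.of α).dens m + (GenContFract.of α).dens (m - 1) - 1 ∧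
      Int.fract (x + k * α - c) < L := by
  obtain ⟨n, rfl⟩ : ∃ n, m = n + 1 := ⟨m - 1, by omega⟩
  rw [Nat.add_sub_cancel]
  obtain ⟨q, hq⟩ := exists_nat_eq_nth_den α (n + 1)
  obtain ⟨q', hq'⟩ := exists_nat_eq_nth_den α n
  obtain ⟨A, hA⟩ := exists_int_eq_nth_num α (n + 1)
  obtain ⟨A', hA'⟩ := exists_int_eq_nth_num α n
  have hq0 : 0 < q := by exact_mod_cast hq ▸ zero_lt_of_den α (n + 1)
  obtain ⟨k, hk, hfract⟩ := exists_fract_add_mul_lt α hq0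
    (by rw [denMulSubNum, hq, hA]) (by rw [denMulSubNum, hq', hA'])
    (denMulSubNum_succ_mul_neg hα n) (abs_denMulSubNum_succ_le hα n) (x - c)
  refine ⟨k, ?_, ?_⟩
  · have : (k : ℝ) + 1 ≤ q + q' := by exact_mod_cast hk
    rw [hq, hq']
    linarith
  · rw [sub_add_eq_add_sub] at hfract
    exact hfract.trans_le ((abs_denMulSubNum_le hα n).trans hL)
end
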